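/- arXiv:1607.06696 — 3 statements merged into one kernel-verified Lean document; each statement's English description precedes it below -/
import Mathlib

section
/- Let $A$ be a symmetric positive semidefinite real $n \times n$ matrix and let $(u_1, \ldots, u_n)$ be an orthonormal basis of $\mathbb{R}^n$. Then $\det A \leq \prod_{i=1}^n \langle A u_i, u_i \rangle$. -/
open Matrix

/-! In the orthonormal basis `u`, the operator `A` has a positive semidefinite matrix `B` with the
same determinant and with diagonal entries `⟪A u i, u i⟫`, so the claim is Hadamard's inequality
`det B ≤ ∏ B i i`. If some `B i i` vanishes, so does the `i`-th column of `B`, hence `det B`.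
Otherwise rescale `B` to unit diagonal; then its eigenvalues `λ k ≥ 0` satisfy `∑ λ k = n`, and
`det B = ∏ λ k ≤ ∏ exp (λ k - 1) = exp 0 = 1`. -/

namespace Matrix.PosSemidef

variable {ι : Type*} [Fintype ι] [DecidableEq ι] {B : Matrix ι ι ℝ}

theorem det_le_exp_trace_sub_card (hB : B.PosSemidef) :
    B.det ≤ Real.exp (B.trace - Fintype.card ι) := by
  have hev := hB.eigenvalues_nonneg
  rw [hB.1.det_eq_prod_eigenvalues, hB.1.trace_eq_sum_eigenvalues]
  simp only [RCLike.ofReal_real_eq_id, id]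
  calc ∏ i, hB.1.eigenvalues i ≤ ∏ i, Real.exp (hB.1.eigenvalues i - 1) :=
        Finset.prod_le_prod (fun i _ => hev i)
          fun i _ => by linarith [Real.add_one_le_exp (hB.1.eigenvalues i - 1)]
    _ = Real.exp (∑ i, hB.1.eigenvalues i - Fintype.card ι) := by
        rw [← Real.exp_sum, Finset.sum_sub_distrib]
        simp

theorem det_le_one_of_diag_eq_one (hB : B.PosSemidef) (h : ∀ i, B i i = 1) : B.det ≤ 1 := by
  have htr : B.trace = Fintype.card ι := by simp [trace, h]
  simpa [htr] using hB.det_le_exp_trace_sub_card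

theorem det_eq_zero_of_diag_eq_zero (hB : B.PosSemidef) {i : ι} (hi : B i i = 0) :
    B.det = 0 := by
  have hcol : B *ᵥ Pi.single i 1 = 0 := by
    rw [← hB.dotProduct_mulVec_zero_iff]
    simpa using hi
  rw [mulVec_single_one] at hcol
  exact det_eq_zero_of_column_eq_zero i fun j => congrFun hcol j

theorem det_le_prod_diag_of_diag_pos (hB : B.PosSemidef) (hpos : ∀ i, 0 < B i i) :
    B.det ≤ ∏ i, B i i := by
  set d : ι → ℝ := fun i => (√(B i i))⁻¹
  have hd : ∀ i, d i * d i = (B i i)⁻¹ := fun i => by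
    rw [← mul_inv, Real.mul_self_sqrt (hpos i).le]
  have hC : (diagonal d * B * diagonal d).PosSemidef := by
    simpa using hB.conjTranspose_mul_mul_same (diagonal d)
  have hdetC : (diagonal d * B * diagonal d).det = B.det / ∏ i, B i i := by
    rw [det_mul, det_mul, det_diagonal, mul_right_comm, ← Finset.prod_mul_distrib,
      Finset.prod_congr rfl fun i _ => hd i, Finset.prod_inv_distrib, inv_mul_eq_div]
  have hCdiag : ∀ i, (diagonal d * B * diagonal d) i i = 1 := fun i => by
    rw [mul_diagonal, diagonal_mul, mul_right_comm, hd, inv_mul_cancel₀ (hpos i).ne']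
  rw [← div_le_one (Finset.prod_pos fun i _ => hpos i), ← hdetC]
  exact hC.det_le_one_of_diag_eq_one hCdiag

theorem det_le_prod_diag (hB : B.PosSemidef) : B.det ≤ ∏ i, B i i := by
  by_cases hpos : ∀ i, 0 < B i i
  · exact hB.det_le_prod_diag_of_diag_pos hpos
  · push Not at hpos
    obtain ⟨i, hi⟩ := hpos
    have hi : B i i = 0 := le_antisymm hi hB.diag_nonneg
    rw [hB.det_eq_zero_of_diag_eq_zero hi]
    exact (Finset.prod_eq_zero (f := fun j => B j j) (Finset.mem_univ i) hi).ge

end Matrix.PosSemidef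

theorem LinearMap.IsPositive.det_le_prod_inner {E ι : Type*} [NormedAddCommGroup E]
    [InnerProductSpace ℝ E] [Fintype ι] {T : E →ₗ[ℝ] E} (hT : T.IsPositive)
    (b : OrthonormalBasis ι ℝ E) :
    LinearMap.det T ≤ ∏ i, inner ℝ (b i) (T (b i)) := by
  classical
  rw [← LinearMap.det_toMatrix b.toBasis]
  refine ((LinearMap.posSemidef_toMatrix_iff b).2 hT).det_le_prod_diag.trans_eq ?_
  simp [LinearMap.toMatrix_apply, b.repr_apply_apply]

theorem det_le_prod_inner_orthonormalBasis
    (n : ℕ) (A : Matrix (Fin n) (Fin n) ℝ) (hA : A.PosSemidef)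
    (u : OrthonormalBasis (Fin n) ℝ (EuclideanSpace ℝ (Fin n))) :
    A.det ≤ ∏ i : Fin n,
      inner (𝕜 := ℝ)
        ((WithLp.equiv 2 (Fin n → ℝ)).symm (A.mulVec (u i))) (u i) := by
  have hT : (toEuclideanLin A).IsPositive := isPositive_toEuclideanLin_iff.2 hA
  calc A.det = LinearMap.det (toEuclideanLin A) := (LinearMap.det_toLpLin 2 A).symm
    _ ≤ ∏ i, inner ℝ (u i) (toEuclideanLin A (u i)) := hT.det_le_prod_inner u
    _ = _ := Finset.prod_congr rfl fun i _ => real_inner_comm _ _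
end

section
/- Let $\psi : \mathbb{R}^d \to [0, \infty)$ be integrable and let $q \geq 2$, $r \in \{1, \ldots, q-1\}$ with $\psi^n$ integrable for all $n \geq 1$ (write $c_n := \int \psi^n$). Then for every $N > 0$, $\frac{1}{N^{2d}} \int_{(B_N^d)^4} \psi(t_1 - t_2)^r \psi(t_3 - t_4)^q \psi(t_2 - t_4)^{q-r} \, dt_1\, dt_2\, dt_3\, dt_4 \leq \frac{c_q c_{q-r} c_r \kappa_d}{N^{d}}$, where $B_N^d$ is the ball of radius $N$ centered at the origin and $\kappa_d$ its unit-ball volume. In particular this quantity tends to $0$ as $N \to \infty$. -/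
/-!
Every factor of the integrand is a function of the difference of two of the variables, and these
pairs form the path `t₁ — t₂ — t₄ — t₃`. Integrating out `t₃`, `t₄` and `t₂` in turn, each inner
integral over the ball is at most the integral over the whole space, which by translation
invariance is `c_q`, `c_{q-r}` and `c_r`; the remaining variable `t₁` contributes the volume
`N^d κ_d` of the ball, and the normalisation `N^{-2d}` leaves `N^{-d}`. The estimate is carried out
for lower Lebesgue integrals of `‖·‖ₑ`, where Tonelli's theorem needs no integrability.
-/

open MeasureTheory Filter

open scoped ENNReal

theorem enorm_integral_le_lintegral_of_enorm_le {α E : Type*} [MeasurableSpace α]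
    [NormedAddCommGroup E] [NormedSpace ℝ E] {μ : Measure α} {F : α → E} {Φ : α → ℝ≥0∞}
    (hF : ∀ x, ‖F x‖ₑ ≤ Φ x) : ‖∫ x, F x ∂μ‖ₑ ≤ ∫⁻ x, Φ x ∂μ :=
  (enorm_integral_le_lintegral_enorm F).trans (lintegral_mono hF)

section DifferenceKernels

variable {G : Type*} [MeasurableSpace G] [AddGroup G] [MeasurableAdd₂ G]
  {μ : Measure G}

theorem setLIntegral_comp_sub_right_le [μ.IsAddRightInvariant] (f : G → ℝ≥0∞) (a : G)
    (S : Set G) : ∫⁻ x in S, f (x - a) ∂μ ≤ ∫⁻ x, f x ∂μ :=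
  (setLIntegral_le_lintegral S _).trans_eq (lintegral_sub_right_eq_self f a)

theorem setLIntegral_comp_sub_left_le [MeasurableNeg G] [μ.IsAddLeftInvariant] [μ.IsNegInvariant]
    (f : G → ℝ≥0∞) (a : G) (S : Set G) : ∫⁻ x in S, f (a - x) ∂μ ≤ ∫⁻ x, f x ∂μ :=
  (setLIntegral_le_lintegral S _).trans_eq (lintegral_sub_left_eq_self f a)

variable [MeasurableNeg G] [SFinite μ] [μ.IsAddLeftInvariant] [μ.IsAddRightInvariant]
  [μ.IsNegInvariant]

section Lebesgue

variable {f g h : G → ℝ≥0∞}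

theorem measurable_comp_sub_mul_comp_sub (hg : Measurable g) (hh : Measurable h) (a : G) :
    Measurable fun p : G × G => g (p.1 - p.2) * h (a - p.2) :=
  (hg.comp measurable_sub).mul (hh.comp (measurable_const.sub measurable_snd))

theorem setLIntegral_setLIntegral_comp_sub_mul_comp_sub_le (hg : Measurable g)
    (hh : Measurable h) (a : G) (S : Set G) :
    ∫⁻ x in S, ∫⁻ y in S, g (x - y) * h (a - y) ∂μ ∂μ ≤ (∫⁻ x, g x ∂μ) * ∫⁻ x, h x ∂μ := by
  rw [lintegral_lintegral_swap (measurable_comp_sub_mul_comp_sub hg hh a).aemeasurable]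
  calc ∫⁻ y in S, ∫⁻ x in S, g (x - y) * h (a - y) ∂μ ∂μ
      = ∫⁻ y in S, (∫⁻ x in S, g (x - y) ∂μ) * h (a - y) ∂μ :=
        lintegral_congr fun y => lintegral_mul_const _ (hg.comp (measurable_id.sub_const y))
    _ ≤ ∫⁻ y in S, (∫⁻ x, g x ∂μ) * h (a - y) ∂μ := by
        refine lintegral_mono fun y => ?_
        gcongr ?_ * _
        exact setLIntegral_comp_sub_right_le g y S
    _ = (∫⁻ x, g x ∂μ) * ∫⁻ y in S, h (a - y) ∂μ :=
        lintegral_const_mul _ (hh.comp (measurable_const.sub measurable_id))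
    _ ≤ (∫⁻ x, g x ∂μ) * ∫⁻ x, h x ∂μ := by
        gcongr _ * ?_
        exact setLIntegral_comp_sub_left_le h a S

theorem setLIntegral_comp_sub_chain_le (hf : Measurable f) (hg : Measurable g)
    (hh : Measurable h) (S : Set G) :
    ∫⁻ t₁ in S, ∫⁻ t₂ in S, ∫⁻ t₃ in S, ∫⁻ t₄ in S,
        f (t₁ - t₂) * g (t₃ - t₄) * h (t₂ - t₄) ∂μ ∂μ ∂μ ∂μ
      ≤ (∫⁻ x, g x ∂μ) * (∫⁻ x, h x ∂μ) * (∫⁻ x, f x ∂μ) * μ S := by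
  set C := (∫⁻ x, g x ∂μ) * ∫⁻ x, h x ∂μ
  calc ∫⁻ t₁ in S, ∫⁻ t₂ in S, ∫⁻ t₃ in S, ∫⁻ t₄ in S,
        f (t₁ - t₂) * g (t₃ - t₄) * h (t₂ - t₄) ∂μ ∂μ ∂μ ∂μ
      = ∫⁻ t₁ in S, ∫⁻ t₂ in S,
          f (t₁ - t₂) * ∫⁻ t₃ in S, ∫⁻ t₄ in S, g (t₃ - t₄) * h (t₂ - t₄) ∂μ ∂μ ∂μ ∂μ := by
        refine lintegral_congr fun t₁ => lintegral_congr fun t₂ => ?_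
        have hpair := measurable_comp_sub_mul_comp_sub hg hh t₂
        simp only [mul_assoc]
        rw [← lintegral_const_mul _ (hpair.lintegral_prod_right (ν := μ.restrict S))]
        exact lintegral_congr fun t₃ =>
          lintegral_const_mul _ (hpair.comp measurable_prodMk_left)
    _ ≤ ∫⁻ t₁ in S, ∫⁻ t₂ in S, f (t₁ - t₂) * C ∂μ ∂μ := by
        gcongr with t₁ t₂
        exact setLIntegral_setLIntegral_comp_sub_mul_comp_sub_le hg hh t₂ S
    _ = ∫⁻ t₁ in S, (∫⁻ t₂ in S, f (t₁ - t₂) ∂μ) * C ∂μ :=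
        lintegral_congr fun t₁ =>
          lintegral_mul_const _ (hf.comp (measurable_const.sub measurable_id))
    _ ≤ ∫⁻ _ in S, (∫⁻ x, f x ∂μ) * C ∂μ := by
        refine lintegral_mono fun t₁ => ?_
        gcongr ?_ * _
        exact setLIntegral_comp_sub_left_le f t₁ S
    _ = C * (∫⁻ x, f x ∂μ) * μ S := by
        rw [setLIntegral_const, mul_comm C]

end Lebesgue

variable {𝕜 : Type*} [RCLike 𝕜] {f g h : G → 𝕜}

theorem enorm_setIntegral_comp_sub_chain_le (hf : StronglyMeasurable f)
    (hg : StronglyMeasurable g) (hh : StronglyMeasurable h) (S : Set G) :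
    ‖∫ t₁ in S, ∫ t₂ in S, ∫ t₃ in S, ∫ t₄ in S,
        f (t₁ - t₂) * g (t₃ - t₄) * h (t₂ - t₄) ∂μ ∂μ ∂μ ∂μ‖ₑ
      ≤ (∫⁻ x, ‖g x‖ₑ ∂μ) * (∫⁻ x, ‖h x‖ₑ ∂μ) * (∫⁻ x, ‖f x‖ₑ ∂μ) * μ S := by
  refine le_trans ?_ (setLIntegral_comp_sub_chain_le hf.enorm hg.enorm hh.enorm S)
  refine enorm_integral_le_lintegral_of_enorm_le fun t₁ => ?_
  refine enorm_integral_le_lintegral_of_enorm_le fun t₂ => ?_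
  refine enorm_integral_le_lintegral_of_enorm_le fun t₃ => ?_
  refine enorm_integral_le_lintegral_of_enorm_le fun t₄ => ?_
  simp only [enorm_mul, le_refl]

theorem norm_setIntegral_comp_sub_chain_le (hf : StronglyMeasurable f)
    (hg : StronglyMeasurable g) (hh : StronglyMeasurable h) (hfi : Integrable f μ)
    (hgi : Integrable g μ) (hhi : Integrable h μ) {S : Set G} (hS : μ S ≠ ∞) :
    ‖∫ t₁ in S, ∫ t₂ in S, ∫ t₃ in S, ∫ t₄ in S,
        f (t₁ - t₂) * g (t₃ - t₄) * h (t₂ - t₄) ∂μ ∂μ ∂μ ∂μ‖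
      ≤ (∫ x, ‖g x‖ ∂μ) * (∫ x, ‖h x‖ ∂μ) * (∫ x, ‖f x‖ ∂μ) * (μ S).toReal := by
  rw [integral_norm_eq_lintegral_enorm hf.aestronglyMeasurable,
    integral_norm_eq_lintegral_enorm hg.aestronglyMeasurable,
    integral_norm_eq_lintegral_enorm hh.aestronglyMeasurable,
    ← ENNReal.toReal_mul, ← ENNReal.toReal_mul, ← ENNReal.toReal_mul, ← toReal_enorm]
  refine ENNReal.toReal_mono ?_ (enorm_setIntegral_comp_sub_chain_le hf hg hh S)
  exact ENNReal.mul_ne_top (ENNReal.mul_ne_top (ENNReal.mul_ne_top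
    hgi.2.ne hhi.2.ne) hfi.2.ne) hS

end DifferenceKernels

theorem toReal_addHaar_ball_of_pos {E : Type*} [NormedAddCommGroup E] [NormedSpace ℝ E]
    [MeasurableSpace E] [BorelSpace E] [FiniteDimensional ℝ E] (μ : Measure E)
    [μ.IsAddHaarMeasure] (x : E) {N : ℝ} (hN : 0 < N) :
    (μ (Metric.ball x N)).toReal = N ^ Module.finrank ℝ E * (μ (Metric.ball 0 1)).toReal := by
  rw [Measure.addHaar_ball_of_pos μ x hN, ENNReal.toReal_mul,
    ENNReal.toReal_ofReal (by positivity)]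

theorem one_div_pow_two_mul_mul_le_and_tendsto_zero {d : ℕ} (hd : d ≠ 0) {I : ℝ → ℝ} {C : ℝ}
    (hI₀ : ∀ N, 0 ≤ I N) (hI : ∀ N, 0 < N → I N ≤ C * N ^ d) :
    (∀ N : ℝ, 0 < N → 1 / N ^ (2 * d) * I N ≤ C / N ^ d) ∧
      Tendsto (fun N => 1 / N ^ (2 * d) * I N) atTop (nhds 0) := by
  have hle (N : ℝ) (hN : 0 < N) : 1 / N ^ (2 * d) * I N ≤ C / N ^ d :=
    calc 1 / N ^ (2 * d) * I N ≤ 1 / N ^ (2 * d) * (C * N ^ d) := by gcongr; exact hI N hN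
      _ = C / N ^ d := by rw [two_mul, pow_add]; field_simp
  refine ⟨hle, tendsto_of_tendsto_of_tendsto_of_le_of_le' tendsto_const_nhds
    ((tendsto_pow_atTop hd).const_div_atTop C) ?_ (eventually_gt_atTop 0 |>.mono hle)⟩
  filter_upwards [eventually_gt_atTop (0 : ℝ)] with N hN
  exact mul_nonneg (by positivity) (hI₀ N)

theorem contraction_integral_bound_general
    (d : ℕ) (ψ : EuclideanSpace ℝ (Fin d) → ℝ)
    (hpos : ∀ t, 0 ≤ ψ t) (hmeas : Measurable ψ)
    (hint : ∀ n : ℕ, 1 ≤ n → Integrable (fun t => ψ t ^ n))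
    (hd : 1 ≤ d) (q r : ℕ) (hr : 1 ≤ r) (hrq : r ≤ q - 1) :
    (∀ N : ℝ, 0 < N →
      (1 / N ^ (2 * d)) *
        (∫ t₁ in Metric.ball (0 : EuclideanSpace ℝ (Fin d)) N,
          ∫ t₂ in Metric.ball (0 : EuclideanSpace ℝ (Fin d)) N,
          ∫ t₃ in Metric.ball (0 : EuclideanSpace ℝ (Fin d)) N,
          ∫ t₄ in Metric.ball (0 : EuclideanSpace ℝ (Fin d)) N,
            ψ (t₁ - t₂) ^ r * ψ (t₃ - t₄) ^ q * ψ (t₂ - t₄) ^ (q - r))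
      ≤ (∫ t, ψ t ^ q) * (∫ t, ψ t ^ (q - r)) * (∫ t, ψ t ^ r)
          * (volume (Metric.ball (0 : EuclideanSpace ℝ (Fin d)) 1)).toReal / N ^ d) ∧
    Tendsto (fun N : ℝ =>
      (1 / N ^ (2 * d)) *
        (∫ t₁ in Metric.ball (0 : EuclideanSpace ℝ (Fin d)) N,
          ∫ t₂ in Metric.ball (0 : EuclideanSpace ℝ (Fin d)) N,
          ∫ t₃ in Metric.ball (0 : EuclideanSpace ℝ (Fin d)) N,
          ∫ t₄ in Metric.ball (0 : EuclideanSpace ℝ (Fin d)) N,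
            ψ (t₁ - t₂) ^ r * ψ (t₃ - t₄) ^ q * ψ (t₂ - t₄) ^ (q - r)))
      atTop (nhds 0) := by
  have hpow_meas (n : ℕ) : StronglyMeasurable fun t => ψ t ^ n :=
    (hmeas.pow_const n).stronglyMeasurable
  have hpow_norm (n : ℕ) : ∫ t, ‖ψ t ^ n‖ = ∫ t, ψ t ^ n :=
    integral_congr_ae (ae_of_all _ fun t => Real.norm_of_nonneg (pow_nonneg (hpos t) n))
  refine one_div_pow_two_mul_mul_le_and_tendsto_zero (by omega) (fun N => ?_) (fun N hN => ?_)
  · refine integral_nonneg fun t₁ => integral_nonneg fun t₂ =>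
      integral_nonneg fun t₃ => integral_nonneg fun t₄ => ?_
    have := hpos (t₁ - t₂); have := hpos (t₃ - t₄); have := hpos (t₂ - t₄)
    positivity
  · have h := norm_setIntegral_comp_sub_chain_le (hpow_meas r) (hpow_meas q) (hpow_meas (q - r))
      (hint r hr) (hint q (by omega)) (hint (q - r) (by omega))
      (measure_ball_lt_top (x := (0 : EuclideanSpace ℝ (Fin d))) (r := N)).ne
    rw [hpow_norm, hpow_norm, hpow_norm, toReal_addHaar_ball_of_pos volume 0 hN,
      finrank_euclideanSpace_fin] at h
    exact (Real.le_norm_self _).trans (h.trans_eq (by ring))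

/-- Key contraction estimate: the normalized fourfold integral of products of powers
of an integrable nonnegative function over four balls of radius `N` is bounded by
`c_q c_{q-r} c_r κ_d / N^d`, and in particular tends to `0` as `N → ∞`. -/
theorem contraction_integral_bound
    (d : ℕ) (ψ : EuclideanSpace ℝ (Fin d) → ℝ)
    (hpos : ∀ t, 0 ≤ ψ t) (hmeas : Measurable ψ)
    (hint : ∀ n : ℕ, 1 ≤ n → Integrable (fun t => ψ t ^ n))
    (hd : 1 ≤ d) (q r : ℕ) (hq : 2 ≤ q) (hr : 1 ≤ r) (hrq : r ≤ q - 1) :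
    (∀ N : ℝ, 0 < N →
      (1 / N ^ (2 * d)) *
        (∫ t₁ in Metric.ball (0 : EuclideanSpace ℝ (Fin d)) N,
          ∫ t₂ in Metric.ball (0 : EuclideanSpace ℝ (Fin d)) N,
          ∫ t₃ in Metric.ball (0 : EuclideanSpace ℝ (Fin d)) N,
          ∫ t₄ in Metric.ball (0 : EuclideanSpace ℝ (Fin d)) N,
            ψ (t₁ - t₂) ^ r * ψ (t₃ - t₄) ^ q * ψ (t₂ - t₄) ^ (q - r))
      ≤ (∫ t, ψ t ^ q) * (∫ t, ψ t ^ (q - r)) * (∫ t, ψ t ^ r)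
          * (volume (Metric.ball (0 : EuclideanSpace ℝ (Fin d)) 1)).toReal / N ^ d) ∧
    Tendsto (fun N : ℝ =>
      (1 / N ^ (2 * d)) *
        (∫ t₁ in Metric.ball (0 : EuclideanSpace ℝ (Fin d)) N,
          ∫ t₂ in Metric.ball (0 : EuclideanSpace ℝ (Fin d)) N,
          ∫ t₃ in Metric.ball (0 : EuclideanSpace ℝ (Fin d)) N,
          ∫ t₄ in Metric.ball (0 : EuclideanSpace ℝ (Fin d)) N,
            ψ (t₁ - t₂) ^ r * ψ (t₃ - t₄) ^ q * ψ (t₂ - t₄) ^ (q - r)))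
      atTop (nhds 0) :=
  contraction_integral_bound_general d ψ hpos hmeas hint hd q r hr hrq
end

section
/- Let $\phi_K$ denote the standard Gaussian density on $\mathbb{R}^K$ and let $l \in \mathbb{R}^K$ with $\|l\| < 1$, and set $\alpha := \sqrt{1 - \|l\|^2}$. Define $h : \mathbb{R}^K \to \mathbb{R}$ by $h(x) := \phi(\alpha^{-1} \langle l, x \rangle)$ where $\phi$ is the one-dimensional standard Gaussian density. Then the convolution satisfies $(h * \phi_K)(y) = \alpha\, \phi(\langle l, y \rangle)$ for all $y \in \mathbb{R}^K$. -/
/-! In an orthonormal basis whose first vector is `l / ‖l‖`, the standard Gaussian density on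
`ℝ^K` is a product of one-dimensional ones and `⟪l, x⟫ = ‖l‖ x₀`, so integrating out the other
coordinates reduces the identity to the one-dimensional integral
`∫ φ(α⁻¹ (c - ‖l‖ t)) φ(t) dt = α φ(c)`. Since `‖l‖² + α² = 1`, completing the square turns its
integrand into `φ(c)` times an unnormalised Gaussian density of variance `α²`. -/

open MeasureTheory Real
open scoped RealInnerProductSpace

lemma exists_orthonormalBasis_apply_eq {ι E : Type*} [Fintype ι] [NormedAddCommGroup E]
    [InnerProductSpace ℝ E] [FiniteDimensional ℝ E] (hι : Module.finrank ℝ E = Fintype.card ι)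
    (i : ι) {e : E} (he : ‖e‖ = 1) : ∃ b : OrthonormalBasis ι ℝ E, b i = e := by
  obtain ⟨b, hb⟩ := Orthonormal.exists_orthonormalBasis_extension_of_card_eq hι
    (v := fun _ ↦ e) (s := {i}) (by simp [he])
  exact ⟨b, hb i rfl⟩

lemma integral_exp_neg_sq_div_two : ∫ t : ℝ, exp (-t ^ 2 / 2) = √(2 * π) := by
  simpa [neg_div, div_eq_inv_mul, div_inv_eq_mul, mul_comm] using integral_gaussian (1 / 2)

lemma integral_exp_neg_sq_sub_mul_mul_exp_neg_sq {α r : ℝ} (hα : 0 < α)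
    (hrα : r ^ 2 + α ^ 2 = 1) (c : ℝ) :
    ∫ t, exp (-(α⁻¹ * (c - r * t)) ^ 2 / 2) * exp (-t ^ 2 / 2)
      = α * √(2 * π) * exp (-c ^ 2 / 2) := by
  have hsq (t : ℝ) : exp (-(α⁻¹ * (c - r * t)) ^ 2 / 2) * exp (-t ^ 2 / 2)
      = exp (-c ^ 2 / 2) * exp (-(2 * α ^ 2)⁻¹ * (t - r * c) ^ 2) := by
    rw [← exp_add, ← exp_add]
    congr 1
    field_simp
    linear_combination (c ^ 2 - t ^ 2) * hrα
  simp_rw [hsq]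
  rw [integral_const_mul, integral_sub_right_eq_self (fun t ↦ exp (-(2 * α ^ 2)⁻¹ * t ^ 2)),
    integral_gaussian, show π / (2 * α ^ 2)⁻¹ = α ^ 2 * (2 * π) by field_simp,
    sqrt_mul (sq_nonneg α), sqrt_sq hα.le]
  ring

lemma EuclideanSpace.integral_comp_apply_zero_mul_exp_neg_norm_sq (n : ℕ) (f : ℝ → ℝ) :
    ∫ v : EuclideanSpace ℝ (Fin (n + 1)), f (v 0) * exp (-‖v‖ ^ 2 / 2)
      = √(2 * π) ^ n * ∫ t, f t * exp (-t ^ 2 / 2) := by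
  let g : (i : Fin (n + 1)) → ℝ → ℝ :=
    Fin.cons (fun t ↦ f t * exp (-t ^ 2 / 2)) (fun _ t ↦ exp (-t ^ 2 / 2))
  have hg (v : Fin (n + 1) → ℝ) :
      f (WithLp.toLp 2 v 0) * exp (-‖WithLp.toLp 2 v‖ ^ 2 / 2) = ∏ i, g i (v i) := by
    rw [EuclideanSpace.real_norm_sq_eq, Fin.prod_univ_succ, Fin.sum_univ_succ]
    simp only [g, Fin.cons_zero, Fin.cons_succ, ← exp_sum, mul_assoc, ← exp_add, neg_div,
      Finset.sum_neg_distrib, ← Finset.sum_div]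
    ring_nf
  rw [← (PiLp.volume_preserving_toLp (Fin (n + 1))).integral_comp
    (MeasurableEquiv.toLp 2 _).measurableEmbedding]
  simp_rw [hg, volume_pi, integral_fintype_prod_eq_prod, Fin.prod_univ_succ]
  simp [g, integral_exp_neg_sq_div_two, mul_comm]

section InnerProductSpace

variable {E : Type*} [NormedAddCommGroup E] [InnerProductSpace ℝ E] [FiniteDimensional ℝ E]
  [MeasurableSpace E] [BorelSpace E]

lemma integral_exp_neg_norm_sq_div_two :
    ∫ x : E, exp (-‖x‖ ^ 2 / 2) = √(2 * π) ^ Module.finrank ℝ E := by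
  have h := GaussianFourier.integral_rexp_neg_mul_sq_norm (V := E) (b := 1 / 2) (by norm_num)
  rw [show π / (1 / 2) = 2 * π by ring] at h
  rw [sqrt_eq_rpow, ← rpow_natCast, ← rpow_mul (by positivity), one_div_mul_eq_div, ← h]
  congr 1 with x
  ring_nf

lemma integral_comp_inner_mul_exp_neg_norm_sq_of_norm_eq_one {n : ℕ}
    (hn : Module.finrank ℝ E = n + 1) {e : E} (he : ‖e‖ = 1) (f : ℝ → ℝ) :
    ∫ x : E, f ⟪e, x⟫ * exp (-‖x‖ ^ 2 / 2) = √(2 * π) ^ n * ∫ t, f t * exp (-t ^ 2 / 2) := by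
  obtain ⟨b, rfl⟩ := exists_orthonormalBasis_apply_eq (by simpa using hn) (0 : Fin (n + 1)) he
  rw [← EuclideanSpace.integral_comp_apply_zero_mul_exp_neg_norm_sq,
    ← b.measurePreserving_repr_symm.integral_comp b.repr.symm.toHomeomorph.measurableEmbedding]
  simp [← b.repr_apply_apply]

lemma integral_comp_inner_mul_exp_neg_norm_sq (l : E) (f : ℝ → ℝ) :
    √(2 * π) * ∫ x : E, f ⟪l, x⟫ * exp (-‖x‖ ^ 2 / 2)
      = √(2 * π) ^ Module.finrank ℝ E * ∫ t, f (‖l‖ * t) * exp (-t ^ 2 / 2) := by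
  rcases eq_or_ne l 0 with rfl | hl
  · simp only [inner_zero_left, norm_zero, zero_mul]
    rw [integral_const_mul, integral_const_mul, integral_exp_neg_norm_sq_div_two,
      integral_exp_neg_sq_div_two]
    ring
  obtain ⟨n, hn⟩ : ∃ n, Module.finrank ℝ E = n + 1 :=
    Nat.exists_eq_succ_of_ne_zero (Module.finrank_pos_iff_exists_ne_zero.2 ⟨l, hl⟩).ne'
  set e := ‖l‖⁻¹ • l
  have he : ‖e‖ = 1 := norm_smul_inv_norm hl
  have hle (x : E) : ⟪l, x⟫ = ‖l‖ * ⟪e, x⟫ := by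
    rw [real_inner_smul_left, mul_inv_cancel_left₀ (norm_ne_zero_iff.2 hl)]
  simp_rw [hle]
  rw [integral_comp_inner_mul_exp_neg_norm_sq_of_norm_eq_one hn he (fun s ↦ f (‖l‖ * s)), hn,
    pow_succ]
  ring

end InnerProductSpace

/-- Gaussian convolution identity: for `l ∈ ℝ^K` with `‖l‖ < 1` and
`α = √(1 - ‖l‖²)`, the convolution of `h(x) = φ(α⁻¹⟨l,x⟩)` with the standard
Gaussian density `φ_K` satisfies `(h * φ_K)(y) = α φ(⟨l, y⟩)`. -/
theorem gaussian_convolution_identity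
    (K : ℕ) (l : EuclideanSpace ℝ (Fin K)) (hl : ‖l‖ < 1) (y : EuclideanSpace ℝ (Fin K)) :
    (∫ x : EuclideanSpace ℝ (Fin K),
        ((Real.sqrt (2 * Real.pi))⁻¹
            * Real.exp (-((Real.sqrt (1 - ‖l‖ ^ 2))⁻¹ * inner (𝕜 := ℝ) l (y - x)) ^ 2 / 2))
          * ((2 * Real.pi) ^ (-(K : ℝ) / 2) * Real.exp (-‖x‖ ^ 2 / 2)))
      = Real.sqrt (1 - ‖l‖ ^ 2)
          * ((Real.sqrt (2 * Real.pi))⁻¹ * Real.exp (-(inner (𝕜 := ℝ) l y : ℝ) ^ 2 / 2)) := by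
  set α := √(1 - ‖l‖ ^ 2)
  set c : ℝ := ⟪l, y⟫
  have hα : 0 < α := sqrt_pos.2 (by nlinarith [norm_nonneg l])
  have hlα : ‖l‖ ^ 2 + α ^ 2 = 1 := by rw [sq_sqrt (by nlinarith [norm_nonneg l])]; ring
  have hK : (2 * π) ^ (-(K : ℝ) / 2) = (√(2 * π) ^ K)⁻¹ := by
    rw [sqrt_eq_rpow, ← rpow_natCast, ← rpow_mul (by positivity), ← rpow_neg (by positivity)]
    ring_nf
  have hmarg := integral_comp_inner_mul_exp_neg_norm_sq l (fun s ↦ exp (-(α⁻¹ * (c - s)) ^ 2 / 2))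
  rw [integral_exp_neg_sq_sub_mul_mul_exp_neg_sq hα hlα, finrank_euclideanSpace_fin] at hmarg
  simp_rw [inner_sub_right, mul_mul_mul_comm _ (exp _), integral_const_mul, hK]
  generalize (∫ x, exp (-(α⁻¹ * (c - ⟪l, x⟫)) ^ 2 / 2) * exp (-‖x‖ ^ 2 / 2)) = I at hmarg ⊢
  obtain rfl : I = √(2 * π) ^ K * α * exp (-c ^ 2 / 2) :=
    mul_left_cancel₀ (sqrt_pos.2 two_pi_pos).ne' (by rw [hmarg]; ring)
  field_simp
end
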